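/- arXiv:1212.2408 — 4 statements merged into one kernel-verified Lean document; each statement's English description precedes it below -/
import Mathlib

section
/- Let Λ : ℝ → ℂ be smooth with Re Λ(s) > 0 for all s in a compact interval R containing 0, and let T : ℝ → ℂ solve T'' + Λ·T = 0. Define the energy W(s) = (1/2)|T'(s)|² + (1/2)(Re Λ(s))|T(s)|². Then for all s ∈ R, W(0)·exp(−|∫₀ˢ (2|Im Λ(σ)|/√(Re Λ(σ)) + |d/dσ log Re Λ(σ)|) dσ|) ≤ W(s) ≤ W(0)·exp(|∫₀ˢ (2|Im Λ(σ)|/√(Re Λ(σ)) + |d/dσ log Re Λ(σ)|) dσ|). -/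
open Set intervalIntegral MeasureTheory

/-- Derivative of the oscillator energy. -/
private lemma osc_W_deriv (Λ : ℝ → ℂ) (T T' T'' : ℝ → ℂ)
    (hT1 : ∀ s, HasDerivAt T (T' s) s) (hT2 : ∀ s, HasDerivAt T' (T'' s) s)
    (hode : ∀ s, T'' s + Λ s * T s = 0)
    (hrd : ∀ t, HasDerivAt (fun t : ℝ => (Λ t).re) (deriv (fun t : ℝ => (Λ t).re) t) t)
    (W : ℝ → ℝ)
    (hW : ∀ s, W s = (1/2) * ‖T' s‖ ^ 2
        + (1/2) * (Λ s).re * ‖T s‖ ^ 2)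
    (s : ℝ) :
    HasDerivAt W ((Λ s).im * (T s * (starRingEnd ℂ) (T' s)).im
      + (1/2) * deriv (fun t : ℝ => (Λ t).re) s * Complex.normSq (T s)) s := by
  have hTre : ∀ t, HasDerivAt (fun u => (T u).re) ((T' t).re) t := fun t =>
    Complex.reCLM.hasFDerivAt.comp_hasDerivAt t (hT1 t)
  have hTim : ∀ t, HasDerivAt (fun u => (T u).im) ((T' t).im) t := fun t =>
    Complex.imCLM.hasFDerivAt.comp_hasDerivAt t (hT1 t)
  have hT're : ∀ t, HasDerivAt (fun u => (T' u).re) ((T'' t).re) t := fun t =>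
    Complex.reCLM.hasFDerivAt.comp_hasDerivAt t (hT2 t)
  have hT'im : ∀ t, HasDerivAt (fun u => (T' u).im) ((T'' t).im) t := fun t =>
    Complex.imCLM.hasFDerivAt.comp_hasDerivAt t (hT2 t)
  have hfun : W = fun u => (1/2) * ((T' u).re * (T' u).re + (T' u).im * (T' u).im)
      + (1/2) * ((Λ u).re * ((T u).re * (T u).re + (T u).im * (T u).im)) := by
    funext u
    rw [hW u, Complex.sq_norm, Complex.sq_norm, Complex.normSq_apply, Complex.normSq_apply]
    ring
  have hbig : HasDerivAt (fun u => (1/2) * ((T' u).re * (T' u).re + (T' u).im * (T' u).im)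
      + (1/2) * ((Λ u).re * ((T u).re * (T u).re + (T u).im * (T u).im)))
      ((1/2) * (((T'' s).re * (T' s).re + (T' s).re * (T'' s).re)
          + ((T'' s).im * (T' s).im + (T' s).im * (T'' s).im))
       + (1/2) * (deriv (fun t : ℝ => (Λ t).re) s
            * ((T s).re * (T s).re + (T s).im * (T s).im)
          + (Λ s).re * (((T' s).re * (T s).re + (T s).re * (T' s).re)
            + ((T' s).im * (T s).im + (T s).im * (T' s).im)))) s := by
    exact ((((hT're s).mul (hT're s)).add ((hT'im s).mul (hT'im s))).const_mul _).add
      (((hrd s).mul (((hTre s).mul (hTre s)).add ((hTim s).mul (hTim s)))).const_mul _)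
  rw [hfun]
  have hode' : T'' s = -(Λ s * T s) := eq_neg_of_add_eq_zero_left (hode s)
  have h6 : (T'' s).re = -((Λ s).re * (T s).re - (Λ s).im * (T s).im) := by
    rw [hode']; simp [Complex.mul_re]
  have h7 : (T'' s).im = -((Λ s).re * (T s).im + (Λ s).im * (T s).re) := by
    rw [hode']; simp [Complex.mul_im]
  convert hbig using 1
  rw [h6, h7]
  simp only [Complex.mul_im, Complex.mul_re, Complex.conj_re, Complex.conj_im,
    Complex.normSq_apply]
  ring

/-- Two-sided Grönwall sandwich. -/
private lemma gronwall_sandwich {a b : ℝ} (hab : a ≤ b) (h0 : (0:ℝ) ∈ Set.Icc a b)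
    (W w' g : ℝ → ℝ)
    (hWd : ∀ s, HasDerivAt W (w' s) s)
    (hg : ContinuousOn g (Set.Icc a b))
    (hgnn : ∀ σ, 0 ≤ g σ)
    (hbound : ∀ s ∈ Set.Icc a b, |w' s| ≤ g s * W s) :
    ∀ s ∈ Set.Icc a b,
      W 0 * Real.exp (-|∫ σ in (0:ℝ)..s, g σ|) ≤ W s ∧
      W s ≤ W 0 * Real.exp (|∫ σ in (0:ℝ)..s, g σ|) := by
  have hWc : Continuous W := by
    have : Differentiable ℝ W := fun t => (hWd t).differentiableAt
    exact this.continuous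
  have huIcc : Set.uIcc a b = Set.Icc a b := Set.uIcc_of_le hab
  have hsub : ∀ x ∈ Set.Icc a b, Set.uIcc 0 x ⊆ Set.Icc a b := by
    intro x hx
    rw [← huIcc]
    exact Set.uIcc_subset_uIcc (huIcc ▸ h0) (huIcc ▸ hx)
  have hint : ∀ x ∈ Set.Icc a b, IntervalIntegrable g volume 0 x := fun x hx =>
    (hg.mono (hsub x hx)).intervalIntegrable
  have hGcont : ContinuousOn (fun u => ∫ σ in (0:ℝ)..u, g σ) (Set.Icc a b) := by
    rw [← huIcc]
    exact intervalIntegral.continuousOn_primitive_interval'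
      ((hg.mono huIcc.subset).intervalIntegrable) (huIcc ▸ h0)
  have hGd : ∀ x ∈ Set.Ioo a b, HasDerivAt (fun u => ∫ σ in (0:ℝ)..u, g σ) (g x) x := by
    intro x hx
    exact intervalIntegral.integral_hasDerivAt_right (hint x (Set.Ioo_subset_Icc_self hx))
      ((hg.mono Set.Ioo_subset_Icc_self).stronglyMeasurableAtFilter isOpen_Ioo x hx)
      (((hg.mono Set.Ioo_subset_Icc_self) x hx).continuousAt (isOpen_Ioo.mem_nhds hx))
  -- F₋ = W * exp(-G) is antitone, F₊ = W * exp(G) is monotone on [a,b]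
  have hderm : ∀ x ∈ Set.Ioo a b,
      HasDerivAt (fun t => W t * Real.exp (-(∫ σ in (0:ℝ)..t, g σ)))
        ((w' x - g x * W x) * Real.exp (-(∫ σ in (0:ℝ)..x, g σ))) x := by
    intro x hx
    have h1 : HasDerivAt (fun t => Real.exp (-(∫ σ in (0:ℝ)..t, g σ)))
        (Real.exp (-(∫ σ in (0:ℝ)..x, g σ)) * (-(g x))) x := ((hGd x hx).neg).exp
    have : HasDerivAt (fun t => W t * Real.exp (-(∫ σ in (0:ℝ)..t, g σ))) _ x := (hWd x).mul h1
    convert this using 1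
    ring
  have hderp : ∀ x ∈ Set.Ioo a b,
      HasDerivAt (fun t => W t * Real.exp (∫ σ in (0:ℝ)..t, g σ))
        ((w' x + g x * W x) * Real.exp (∫ σ in (0:ℝ)..x, g σ)) x := by
    intro x hx
    have h1 : HasDerivAt (fun t => Real.exp (∫ σ in (0:ℝ)..t, g σ))
        (Real.exp (∫ σ in (0:ℝ)..x, g σ) * g x) x := (hGd x hx).exp
    have : HasDerivAt (fun t => W t * Real.exp (∫ σ in (0:ℝ)..t, g σ)) _ x := (hWd x).mul h1
    convert this using 1
    ring
  have hFm : AntitoneOn (fun t => W t * Real.exp (-(∫ σ in (0:ℝ)..t, g σ))) (Set.Icc a b) := by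
    apply antitoneOn_of_deriv_nonpos (convex_Icc a b)
    · exact hWc.continuousOn.mul (Real.continuous_exp.comp_continuousOn hGcont.neg)
    · intro x hx
      rw [interior_Icc] at hx
      exact ((hderm x hx).differentiableAt).differentiableWithinAt
    · intro x hx
      rw [interior_Icc] at hx
      rw [(hderm x hx).deriv]
      have hb2 := (abs_le.1 (hbound x (Set.Ioo_subset_Icc_self hx))).2
      have hexp : 0 ≤ Real.exp (-(∫ σ in (0:ℝ)..x, g σ)) := (Real.exp_pos _).le
      apply mul_nonpos_of_nonpos_of_nonneg _ hexp
      linarith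
  have hFp : MonotoneOn (fun t => W t * Real.exp (∫ σ in (0:ℝ)..t, g σ)) (Set.Icc a b) := by
    apply monotoneOn_of_deriv_nonneg (convex_Icc a b)
    · exact hWc.continuousOn.mul (Real.continuous_exp.comp_continuousOn hGcont)
    · intro x hx
      rw [interior_Icc] at hx
      exact ((hderp x hx).differentiableAt).differentiableWithinAt
    · intro x hx
      rw [interior_Icc] at hx
      rw [(hderp x hx).deriv]
      have hb1 := (abs_le.1 (hbound x (Set.Ioo_subset_Icc_self hx))).1
      have hexp : 0 ≤ Real.exp (∫ σ in (0:ℝ)..x, g σ) := (Real.exp_pos _).le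
      apply mul_nonneg _ hexp
      linarith
  intro s hs
  have hG0 : (∫ σ in (0:ℝ)..(0:ℝ), g σ) = 0 := intervalIntegral.integral_same
  rcases le_total 0 s with h0s | hs0
  · have hGnn : 0 ≤ ∫ σ in (0:ℝ)..s, g σ :=
      intervalIntegral.integral_nonneg h0s (fun σ _ => hgnn σ)
    rw [abs_of_nonneg hGnn]
    constructor
    · have h1 := hFp h0 hs h0s
      simp only [hG0, Real.exp_zero, mul_one] at h1
      have h2 := mul_le_mul_of_nonneg_right h1
        (Real.exp_pos (-(∫ σ in (0:ℝ)..s, g σ))).le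
      rwa [mul_assoc, ← Real.exp_add, add_neg_cancel, Real.exp_zero, mul_one] at h2
    · have h1 := hFm h0 hs h0s
      simp only [hG0, neg_zero, Real.exp_zero, mul_one] at h1
      have h2 := mul_le_mul_of_nonneg_right h1
        (Real.exp_pos (∫ σ in (0:ℝ)..s, g σ)).le
      rwa [mul_assoc, ← Real.exp_add, neg_add_cancel, Real.exp_zero, mul_one] at h2
  · have hGnp : (∫ σ in (0:ℝ)..s, g σ) ≤ 0 := by
      have h0' : 0 ≤ ∫ σ in s..(0:ℝ), g σ :=
        intervalIntegral.integral_nonneg hs0 (fun σ _ => hgnn σ)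
      rw [intervalIntegral.integral_symm]
      linarith
    rw [abs_of_nonpos hGnp]
    constructor
    · have h1 := hFm hs h0 hs0
      simp only [hG0, neg_zero, Real.exp_zero, mul_one] at h1
      have h2 := mul_le_mul_of_nonneg_right h1
        (Real.exp_pos (∫ σ in (0:ℝ)..s, g σ)).le
      rw [mul_assoc, ← Real.exp_add, neg_add_cancel, Real.exp_zero, mul_one] at h2
      rw [neg_neg]
      exact h2
    · have h1 := hFp hs h0 hs0
      simp only [hG0, Real.exp_zero, mul_one] at h1
      have h2 := mul_le_mul_of_nonneg_right h1
        (Real.exp_pos (-(∫ σ in (0:ℝ)..s, g σ))).le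
      rwa [mul_assoc, ← Real.exp_add, add_neg_cancel, Real.exp_zero, mul_one] at h2

/-- Energy estimate for the time dependent harmonic oscillator `T'' + Λ T = 0`
with smooth complex `Λ` of positive real part on a compact interval `[a,b] ∋ 0`:
the energy `W(s) = |T'|²/2 + (Re Λ)|T|²/2` is controlled above and below by
`W(0)` times exponential factors. -/
theorem oscillator_energy_estimate
    (Λ : ℝ → ℂ) (hΛ : ContDiff ℝ (⊤ : ℕ∞) Λ)
    (a b : ℝ) (ha : a ≤ 0) (hb : 0 ≤ b)
    (hpos : ∀ s ∈ Set.Icc a b, 0 < (Λ s).re)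
    (T T' T'' : ℝ → ℂ)
    (hT1 : ∀ s, HasDerivAt T (T' s) s) (hT2 : ∀ s, HasDerivAt T' (T'' s) s)
    (hode : ∀ s, T'' s + Λ s * T s = 0)
    (W : ℝ → ℝ)
    (hW : ∀ s, W s = (1/2) * ‖T' s‖ ^ 2
        + (1/2) * (Λ s).re * ‖T s‖ ^ 2) :
    ∀ s ∈ Set.Icc a b,
      W 0 * Real.exp (-|∫ σ in (0:ℝ)..s,
          (2 * |(Λ σ).im| / Real.sqrt ((Λ σ).re)
            + |deriv (fun t => (Λ t).re) σ / (Λ σ).re|)|)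
        ≤ W s ∧
      W s ≤ W 0 * Real.exp (|∫ σ in (0:ℝ)..s,
          (2 * |(Λ σ).im| / Real.sqrt ((Λ σ).re)
            + |deriv (fun t => (Λ t).re) σ / (Λ σ).re|)|) := by
  have hab : a ≤ b := ha.trans hb
  have hrC : ContDiff ℝ (⊤ : ℕ∞) (fun t : ℝ => (Λ t).re) := Complex.reCLM.contDiff.comp hΛ
  have hrd : ∀ t, HasDerivAt (fun t : ℝ => (Λ t).re) (deriv (fun t : ℝ => (Λ t).re) t) t :=
    fun t => ((hrC.differentiable (by simp)) t).hasDerivAt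
  have hΛc : Continuous Λ := hΛ.continuous
  have hr'c : Continuous (deriv fun t : ℝ => (Λ t).re) := hrC.continuous_deriv (by simp)
  have hWd : ∀ s, HasDerivAt W ((Λ s).im * (T s * (starRingEnd ℂ) (T' s)).im
      + (1/2) * deriv (fun t : ℝ => (Λ t).re) s * Complex.normSq (T s)) s :=
    osc_W_deriv Λ T T' T'' hT1 hT2 hode hrd W hW
  have hgc : ContinuousOn (fun σ => 2 * |(Λ σ).im| / Real.sqrt ((Λ σ).re)
      + |deriv (fun t => (Λ t).re) σ / (Λ σ).re|) (Set.Icc a b) := by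
    apply ContinuousOn.add
    · apply ContinuousOn.div
      · exact (continuous_const.mul
          (continuous_abs.comp (Complex.continuous_im.comp hΛc))).continuousOn
      · exact (Real.continuous_sqrt.comp (Complex.continuous_re.comp hΛc)).continuousOn
      · intro x hx
        exact (Real.sqrt_pos.2 (hpos x hx)).ne'
    · apply ContinuousOn.abs
      apply ContinuousOn.div hr'c.continuousOn
        (Complex.continuous_re.comp hΛc).continuousOn
      intro x hx
      exact (hpos x hx).ne'
  have hgnn : ∀ σ, 0 ≤ 2 * |(Λ σ).im| / Real.sqrt ((Λ σ).re)
      + |deriv (fun t => (Λ t).re) σ / (Λ σ).re| :=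
    fun σ => add_nonneg (div_nonneg (by positivity) (Real.sqrt_nonneg _)) (abs_nonneg _)
  have hbound : ∀ s ∈ Set.Icc a b,
      |(Λ s).im * (T s * (starRingEnd ℂ) (T' s)).im
        + (1/2) * deriv (fun t : ℝ => (Λ t).re) s * Complex.normSq (T s)|
      ≤ (2 * |(Λ s).im| / Real.sqrt ((Λ s).re)
          + |deriv (fun t => (Λ t).re) s / (Λ s).re|) * W s := by
    intro s hs
    set R := (Λ s).re with hR_def
    have hR : 0 < R := hpos s hs
    set p := ‖T s‖ with hp_def
    set q := ‖T' s‖ with hq_def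
    set d := deriv (fun t : ℝ => (Λ t).re) s with hd_def
    have hsq : Real.sqrt R ^ 2 = R := Real.sq_sqrt hR.le
    have hsqpos : 0 < Real.sqrt R := Real.sqrt_pos.2 hR
    have hp0 : 0 ≤ p := norm_nonneg _
    have hq0 : 0 ≤ q := norm_nonneg _
    have hWs : W s = 1/2 * q ^ 2 + 1/2 * R * p ^ 2 := hW s
    have key : Real.sqrt R * (p * q) ≤ W s := by
      rw [hWs]; nlinarith [sq_nonneg (q - Real.sqrt R * p)]
    have hWnn : 0 ≤ W s := le_trans (by positivity) key
    have hzim : |(T s * (starRingEnd ℂ) (T' s)).im| ≤ p * q := by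
      calc |(T s * (starRingEnd ℂ) (T' s)).im|
          ≤ ‖T s * (starRingEnd ℂ) (T' s)‖ := Complex.abs_im_le_norm _
        _ = p * q := by rw [norm_mul, Complex.norm_conj]
    have hnsq : Complex.normSq (T s) = p ^ 2 := (Complex.sq_norm _).symm
    have step1 : |(Λ s).im * (T s * (starRingEnd ℂ) (T' s)).im
        + (1/2) * d * Complex.normSq (T s)|
        ≤ |(Λ s).im| * (p * q) + 1/2 * |d| * p ^ 2 := by
      calc |(Λ s).im * (T s * (starRingEnd ℂ) (T' s)).im + (1/2) * d * Complex.normSq (T s)|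
          ≤ |(Λ s).im * (T s * (starRingEnd ℂ) (T' s)).im|
            + |(1/2) * d * Complex.normSq (T s)| := abs_add_le _ _
        _ = |(Λ s).im| * |(T s * (starRingEnd ℂ) (T' s)).im| + 1/2 * |d| * p ^ 2 := by
            rw [abs_mul, abs_mul, abs_mul, hnsq]
            simp [abs_of_nonneg (sq_nonneg p)]
        _ ≤ |(Λ s).im| * (p * q) + 1/2 * |d| * p ^ 2 := by
            have := mul_le_mul_of_nonneg_left hzim (abs_nonneg (Λ s).im)
            linarith
    have habsd : |d / R| = |d| / R := by
      rw [abs_div, abs_of_pos hR]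
    rw [habsd]
    refine le_trans step1 ?_
    have t1 : |(Λ s).im| * (p * q) ≤ 2 * |(Λ s).im| / Real.sqrt R * W s := by
      rw [div_mul_eq_mul_div, le_div_iff₀ hsqpos]
      have h := mul_le_mul_of_nonneg_left key (abs_nonneg (Λ s).im)
      nlinarith [h, mul_nonneg (abs_nonneg (Λ s).im) hWnn]
    have t2 : 1/2 * |d| * p ^ 2 ≤ |d| / R * W s := by
      have hRid : |d| / R * (1/2 * R * p ^ 2) = 1/2 * |d| * p ^ 2 := by
        field_simp
      have hpos2 : 0 ≤ |d| / R * (1/2 * q ^ 2) := by positivity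
      rw [hWs, mul_add]
      linarith
    nlinarith [t1, t2]
  exact gronwall_sandwich hab ⟨ha, hb⟩ W _ _ hWd hgc hgnn hbound
end

section
/- Let Λ : ℝ → ℂ be smooth and κ > 0. Then every solution T of T''(s) + Λ(s)T(s) = 0 can be written as T(s) = τ((1/κ)·tanh(κs))·cosh(κs), where τ is a solution on (−1/κ, 1/κ) of τ''(z) + Ω(z)·τ(z) = 0 with Ω(z) = (κ² + Λ((1/κ)·artanh(κz)))/(1 − κ²z²)². -/
noncomputable def artanh (x : ℝ) : ℝ := (1/2) * Real.log ((1 + x) / (1 - x))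

lemma hasDerivAt_artanh {x : ℝ} (hx : |x| < 1) :
    HasDerivAt artanh (1 / (1 - x ^ 2)) x := by
  rw [abs_lt] at hx
  have h1 : 0 < 1 + x := by linarith
  have h2 : 0 < 1 - x := by linarith
  have hf : HasDerivAt (fun x : ℝ => (1 + x) / (1 - x)) (2 / (1 - x) ^ 2) x := by
    have := ((hasDerivAt_id x).const_add 1).div ((hasDerivAt_id x).const_sub 1) h2.ne'
    refine this.congr_deriv (Eq.symm ?_)
    simp only [id]
    ring
  have hpos : (1 + x) / (1 - x) ≠ 0 := by positivity
  have := (hf.log hpos).const_mul (1/2 : ℝ)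
  refine this.congr_deriv (Eq.symm ?_)
  have hx2 : 1 - x ^ 2 ≠ 0 := by nlinarith
  field_simp
  ring

lemma artanh_tanh (t : ℝ) : artanh (Real.tanh t) = t := by
  unfold artanh
  have hc : 0 < Real.cosh t := Real.cosh_pos t
  have : (1 + Real.tanh t) / (1 - Real.tanh t) = Real.exp t / Real.exp (-t) := by
    rw [Real.tanh_eq_sinh_div_cosh, ← Real.cosh_add_sinh, ← Real.cosh_sub_sinh]
    field_simp
  rw [this, ← Real.exp_sub, Real.log_exp]
  ring

/-- Every solution `T` of `T'' + Λ T = 0` can be written as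
`T(s) = τ(tanh(κ s)/κ) · cosh(κ s)` where `τ` solves `τ'' + Ω τ = 0` on
`(-1/κ, 1/κ)` with `Ω(z) = (κ² + Λ(artanh(κ z)/κ))/(1 - κ² z²)²`. -/
theorem oscillator_kappa_trick
    (Λ : ℝ → ℂ) (hΛ : ContDiff ℝ (⊤ : ℕ∞) Λ) (κ : ℝ) (hκ : 0 < κ)
    (T T' T'' : ℝ → ℂ)
    (hT1 : ∀ s, HasDerivAt T (T' s) s) (hT2 : ∀ s, HasDerivAt T' (T'' s) s)
    (hode : ∀ s, T'' s + Λ s * T s = 0) :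
    ∃ τ τ' τ'' : ℝ → ℂ,
      (∀ z ∈ Set.Ioo (-(1/κ)) (1/κ),
        HasDerivAt τ (τ' z) z ∧ HasDerivAt τ' (τ'' z) z ∧
        τ'' z + (((κ:ℂ)^2 + Λ (artanh (κ * z) / κ)) / ((1 - κ^2 * z^2 : ℝ) : ℂ)^2)
          * τ z = 0) ∧
      (∀ s : ℝ, T s = τ (Real.tanh (κ * s) / κ) * (Real.cosh (κ * s) : ℂ)) := by
  set S : ℝ → ℝ := fun z => artanh (κ * z) / κ with hS
  set u : ℝ → ℝ := fun z => 1 - κ ^ 2 * z ^ 2 with hu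
  set c : ℝ → ℝ := fun z => Real.sqrt (u z) with hc
  refine ⟨fun z => T (S z) * (c z : ℂ),
    fun z => (T' (S z) - (κ:ℂ)^2 * z * T (S z)) / (c z : ℂ),
    fun z => (T'' (S z) - (κ:ℂ)^2 * T (S z)) / (c z : ℂ)^3, ?_, ?_⟩
  · rintro z ⟨hz1, hz2⟩
    have hzabs : |z| < 1/κ := abs_lt.mpr ⟨hz1, hz2⟩
    have hκz : |κ * z| < 1 := by
      rw [abs_mul, abs_of_pos hκ]
      calc κ * |z| < κ * (1/κ) := mul_lt_mul_of_pos_left hzabs hκ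
        _ = 1 := by field_simp
    have huz : 0 < u z := by
      have := abs_lt.mp hκz
      simp only [hu]
      nlinarith
    have hcz : 0 < c z := Real.sqrt_pos.mpr huz
    have hc2 : c z * c z = u z := Real.mul_self_sqrt huz.le
    -- derivative of S
    have hSd : HasDerivAt S (1 / (c z * c z)) z := by
      rw [hc2]
      have h1 : HasDerivAt (fun z : ℝ => artanh (κ * z)) (κ / u z) z := by
        have := (hasDerivAt_artanh hκz).comp z ((hasDerivAt_id z).const_mul κ)
        refine this.congr_deriv (Eq.symm ?_)
        simp only [hu, mul_pow]
        ring
      have := h1.div_const κ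
      refine this.congr_deriv (Eq.symm ?_)
      field_simp
    -- derivative of c
    have hcd : HasDerivAt c (-(κ ^ 2 * z) / c z) z := by
      have hud : HasDerivAt u (-(2 * (κ ^ 2 * z))) z := by
        have := ((hasDerivAt_pow 2 z).const_mul (κ ^ 2)).const_sub 1
        refine this.congr_deriv (Eq.symm ?_)
        ring
      have h2 := (Real.hasDerivAt_sqrt huz.ne').comp z hud
      refine h2.congr_deriv (Eq.symm ?_)
      have hs0 : Real.sqrt (u z) ≠ 0 := hcz.ne'
      show -(κ ^ 2 * z) / Real.sqrt (u z) = _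
      field_simp
    have hCd : HasDerivAt (fun z => ((c z : ℝ) : ℂ)) ((-(κ ^ 2 * z) / c z : ℝ) : ℂ) z :=
      hcd.ofReal_comp
    -- derivatives of compositions
    have hTS : HasDerivAt (fun z => T (S z)) ((1 / (c z * c z) : ℝ) • T' (S z)) z :=
      (hT1 (S z)).scomp z hSd
    have hTS' : HasDerivAt (fun z => T' (S z)) ((1 / (c z * c z) : ℝ) • T'' (S z)) z :=
      (hT2 (S z)).scomp z hSd
    have hcne : (c z : ℂ) ≠ 0 := by exact_mod_cast hcz.ne'
    have hcc1 : (c z : ℂ) * (c z : ℂ) = 1 - (κ : ℂ) ^ 2 * (z : ℂ) ^ 2 := by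
      rw [show ((c z : ℝ) : ℂ) * ((c z : ℝ) : ℂ) = ((c z * c z : ℝ) : ℂ) by push_cast; ring,
        hc2]
      simp only [hu]
      push_cast
      ring
    refine ⟨?_, ?_, ?_⟩
    · -- first derivative
      have := hTS.mul hCd
      refine this.congr_deriv (Eq.symm ?_)
      rw [Complex.real_smul]
      push_cast
      field_simp
      ring
    · -- second derivative
      have hzC : HasDerivAt (fun z : ℝ => ((z : ℝ) : ℂ)) 1 z := by
        simpa using (hasDerivAt_id z).ofReal_comp
      have hnum : HasDerivAt (fun z => T' (S z) - (κ:ℂ)^2 * (z : ℝ) * T (S z))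
          ((1 / (c z * c z) : ℝ) • T'' (S z) -
            ((κ:ℂ)^2 * T (S z) + (κ:ℂ)^2 * z * ((1 / (c z * c z) : ℝ) • T' (S z)))) z := by
        have h2 : HasDerivAt (fun z : ℝ => (κ:ℂ)^2 * (z:ℂ) * T (S z))
            ((κ:ℂ)^2 * T (S z) + (κ:ℂ)^2 * z * ((1 / (c z * c z) : ℝ) • T' (S z))) z := by
          have := ((hzC.const_mul ((κ:ℂ)^2)).mul hTS)
          refine this.congr_deriv (Eq.symm ?_)
          ring
        exact hTS'.sub h2
      have := hnum.div hCd hcne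
      refine this.congr_deriv (Eq.symm ?_)
      rw [Complex.real_smul, Complex.real_smul]
      push_cast
      field_simp
      linear_combination ((κ:ℂ)^2 * T (S z)) * hcc1
    · -- the ODE
      have hsz : artanh (κ * z) / κ = S z := rfl
      rw [hsz]
      have h1 : ((1 - κ^2 * z^2 : ℝ) : ℂ) = (c z : ℂ) * (c z : ℂ) := by
        rw [hcc1]; push_cast; ring
      rw [h1]
      have hode2 := hode (S z)
      field_simp
      linear_combination hode2
  · intro s
    have hS1 : S (Real.tanh (κ * s) / κ) = s := by
      simp only [hS]
      rw [mul_div_cancel₀ _ hκ.ne', artanh_tanh, mul_div_cancel_left₀ _ hκ.ne']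
    have hcosh : 0 < Real.cosh (κ * s) := Real.cosh_pos (κ * s)
    have hc1 : c (Real.tanh (κ * s) / κ) = 1 / Real.cosh (κ * s) := by
      simp only [hc, hu]
      rw [show 1 - κ ^ 2 * (Real.tanh (κ*s) / κ) ^ 2 = 1 - Real.tanh (κ*s) ^ 2 by
        field_simp]
      rw [Real.tanh_eq_sinh_div_cosh]
      rw [show 1 - (Real.sinh (κ*s) / Real.cosh (κ*s))^2
          = (1 / Real.cosh (κ*s))^2 by
        field_simp
        exact Real.cosh_sq_sub_sinh_sq _]
      exact Real.sqrt_sq (by positivity)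
    simp only [hS1, hc1]
    push_cast
    have hne : Complex.cosh ((κ:ℂ) * (s:ℂ)) ≠ 0 := by
      rw [show ((κ:ℂ) * (s:ℂ)) = ((κ * s : ℝ) : ℂ) by push_cast; ring, ← Complex.ofReal_cosh]
      exact_mod_cast hcosh.ne'
    field_simp
end

section
/- Let Λ : ℝ → ℂ be smooth on a compact interval R containing 0. Set A = sup_R |Im Λ|, c = inf_R Re Λ, κ = √(1 + |min(0,c)|), B = sup_R |d/ds log(κ² + Re Λ)|, D = sup_R (κ² + Re Λ), e = inf_R (κ² + Re Λ) = 1 + max(0,c), and L = 2A + cosh²(κ|R|)·B + 2κ·sinh(2κ|R|). Then every solution T of T'' + Λ·T = 0 satisfies |T(s)| ≤ |T(0)|·√(D/e)·e^L·cosh(κ|R|) + |T'(0)|·(1/√e)·e^L·cosh(κ|R|) for all s ∈ R. -/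
set_option maxHeartbeats 4000000

open Set

/-- Derivative of `normSq ∘ F` for `F : ℝ → ℂ`. -/
lemma hasDerivAt_normSq_comp {F : ℝ → ℂ} {F' : ℂ} {s : ℝ} (h : HasDerivAt F F' s) :
    HasDerivAt (fun t => Complex.normSq (F t))
      (2 * (((starRingEnd ℂ) (F s)) * F').re) s := by
  have hre : HasDerivAt (fun t => (F t).re) F'.re s := by
    exact Complex.reCLM.hasFDerivAt.comp_hasDerivAt s h
  have him : HasDerivAt (fun t => (F t).im) F'.im s := by
    exact Complex.imCLM.hasFDerivAt.comp_hasDerivAt s h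
  have hsum := (hre.mul hre).add (him.mul him)
  have heq : (fun t => Complex.normSq (F t))
      = fun t => (F t).re * (F t).re + (F t).im * (F t).im := by
    funext t; simp [Complex.normSq_apply]
  rw [heq]
  refine hsum.congr_deriv ?_
  simp [Complex.mul_re, Complex.conj_re, Complex.conj_im]
  ring

/-- Two-sided Grönwall inequality on an interval containing `0`. -/
lemma gronwall_two_sided (E E' : ℝ → ℝ) (f : ℝ) (hf : 0 ≤ f) (a b : ℝ)
    (ha : a ≤ 0) (hb : 0 ≤ b)
    (hE : ∀ t, HasDerivAt E (E' t) t)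
    (hbound : ∀ t ∈ Icc a b, |E' t| ≤ f * |E t|) :
    ∀ s ∈ Icc a b, |E s| ≤ |E 0| * Real.exp (f * (b - a)) := by
  have hEcont : Continuous E :=
    continuous_iff_continuousAt.2 fun t => (hE t).differentiableAt.continuousAt
  intro s hs
  rcases le_or_gt 0 s with hs0 | hs0
  · -- forward Gronwall on [0, s]
    have key := norm_le_gronwallBound_of_norm_deriv_right_le
      (f := E) (f' := E') (δ := ‖E 0‖) (K := f) (ε := 0) (a := 0) (b := s)
      (hEcont.continuousOn)
      (fun x _ => (hE x).hasDerivWithinAt)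
      le_rfl
      (fun x hx => by
        have hxmem : x ∈ Icc a b := ⟨le_trans ha hx.1, le_trans hx.2.le hs.2⟩
        have := hbound x hxmem
        simpa [Real.norm_eq_abs] using this)
    have h1 := key s ⟨hs0, le_rfl⟩
    rw [gronwallBound_ε0] at h1
    simp only [Real.norm_eq_abs, sub_zero] at h1
    refine h1.trans ?_
    have : Real.exp (f * s) ≤ Real.exp (f * (b - a)) := by
      apply Real.exp_le_exp.2
      have : s ≤ b - a := le_trans hs.2 (by linarith)
      nlinarith
    exact mul_le_mul_of_nonneg_left this (abs_nonneg _)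
  · -- backward: apply to t ↦ E (-t) on [0, -s]
    have hG : ∀ t, HasDerivAt (fun u => E (-u)) (E' (-t) * (-1)) t := by
      intro t
      exact HasDerivAt.comp t (hE (-t)) (hasDerivAt_neg t)
    have key := norm_le_gronwallBound_of_norm_deriv_right_le
      (f := fun u => E (-u)) (f' := fun u => E' (-u) * (-1)) (δ := ‖E 0‖) (K := f) (ε := 0)
      (a := 0) (b := -s)
      ((hEcont.comp continuous_neg).continuousOn)
      (fun x _ => (hG x).hasDerivWithinAt)
      (by simp)
      (fun x hx => by
        have hxmem : -x ∈ Icc a b := by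
          constructor
          · have : x ≤ -s := hx.2.le
            have := hs.1
            linarith
          · have : 0 ≤ x := hx.1
            linarith
        have := hbound (-x) hxmem
        simpa [Real.norm_eq_abs, abs_mul] using this)
    have h1 := key (-s) ⟨by linarith, le_rfl⟩
    rw [gronwallBound_ε0] at h1
    simp only [Real.norm_eq_abs, sub_zero, neg_neg] at h1
    refine h1.trans ?_
    have : Real.exp (f * -s) ≤ Real.exp (f * (b - a)) := by
      apply Real.exp_le_exp.2
      have : -s ≤ b - a := by
        have := hs.1; linarith
      nlinarith
    exact mul_le_mul_of_nonneg_left this (abs_nonneg _)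

/-- Uniform bound for solutions of the time dependent harmonic oscillator
`T'' + Λ T = 0` on a compact interval `R = [a,b] ∋ 0`, in terms of the constants
`A, c, κ, B, D, e, L` built from `Λ` as in the paper. -/
theorem oscillator_uniform_bound
    (Λ : ℝ → ℂ) (hΛ : ContDiff ℝ (⊤ : ℕ∞) Λ)
    (a b : ℝ) (ha : a ≤ 0) (hb : 0 ≤ b)
    (A c κ B D e L : ℝ)
    (hA : A = sSup ((fun s => |(Λ s).im|) '' Icc a b))
    (hc : c = sInf ((fun s => (Λ s).re) '' Icc a b))
    (hκ : κ = Real.sqrt (1 + |min 0 c|))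
    (hB : B = sSup ((fun s =>
        |deriv (fun t => Real.log (κ^2 + (Λ t).re)) s|) '' Icc a b))
    (hD : D = sSup ((fun s => κ^2 + (Λ s).re) '' Icc a b))
    (he : e = 1 + max 0 c)
    (hL : L = 2 * A + Real.cosh (κ * (b - a))^2 * B
        + 2 * κ * Real.sinh (2 * κ * (b - a)))
    (T T' T'' : ℝ → ℂ)
    (hT1 : ∀ s, HasDerivAt T (T' s) s) (hT2 : ∀ s, HasDerivAt T' (T'' s) s)
    (hode : ∀ s, T'' s + Λ s * T s = 0) :
    ∀ s ∈ Icc a b,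
      ‖T s‖
        ≤ ‖T 0‖ * Real.sqrt (D / e) * Real.exp L * Real.cosh (κ * (b - a))
          + ‖T' 0‖ * (1 / Real.sqrt e) * Real.exp L
              * Real.cosh (κ * (b - a)) := by
  
  -- basic setup
  have hIcc0 : (0:ℝ) ∈ Icc a b := ⟨ha, hb⟩
  have hcomp : IsCompact (Icc a b) := isCompact_Icc
  have hΛc : Continuous Λ := hΛ.continuous
  have hΛdiff : Differentiable ℝ Λ := hΛ.differentiable (by simp)
  have hΛ' : ∀ s, HasDerivAt Λ (deriv Λ s) s := fun s => (hΛdiff s).hasDerivAt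
  have hre : ∀ s, HasDerivAt (fun t => (Λ t).re) ((deriv Λ s).re) s := fun s => by
    exact Complex.reCLM.hasFDerivAt.comp_hasDerivAt s (hΛ' s)
  have hΛdc : Continuous (deriv Λ) := (contDiff_infty_iff_deriv.mp (hΛ.of_le (by simp))).2.continuous
  -- bounds from the sSup / sInf definitions
  have himA : ∀ t ∈ Icc a b, |(Λ t).im| ≤ A := by
    intro t ht
    rw [hA]
    exact le_csSup (hcomp.bddAbove_image
      ((continuous_abs.comp (Complex.continuous_im.comp hΛc)).continuousOn))
      ⟨t, ht, rfl⟩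
  have hA0 : 0 ≤ A := le_trans (abs_nonneg _) (himA 0 hIcc0)
  have hcre : ∀ t ∈ Icc a b, c ≤ (Λ t).re := by
    intro t ht
    rw [hc]
    exact csInf_le (hcomp.bddBelow_image
      ((Complex.continuous_re.comp hΛc).continuousOn)) ⟨t, ht, rfl⟩
  have hDre : ∀ t ∈ Icc a b, κ^2 + (Λ t).re ≤ D := by
    intro t ht
    rw [hD]
    exact le_csSup (hcomp.bddAbove_image
      ((continuous_const.add (Complex.continuous_re.comp hΛc)).continuousOn)) ⟨t, ht, rfl⟩
  -- constants
  have hκ2 : κ^2 = 1 + |min 0 c| := by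
    rw [hκ]; exact Real.sq_sqrt (by positivity)
  have hκ1 : 1 ≤ κ := by
    rw [hκ]
    rw [show (1:ℝ) = Real.sqrt 1 from (Real.sqrt_one).symm]
    exact Real.sqrt_le_sqrt (by simp [abs_nonneg])
  have hκ0 : 0 ≤ κ := le_trans zero_le_one hκ1
  have he_eq : e = κ^2 + c := by
    rw [he, hκ2]
    rcases le_total c 0 with h0 | h0
    · rw [min_eq_right h0, abs_of_nonpos h0, max_eq_left h0]; ring
    · rw [min_eq_left h0, abs_zero, max_eq_right h0]; ring
  have he1 : 1 ≤ e := by rw [he]; have := le_max_left (0:ℝ) c; linarith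
  have he0 : 0 < e := lt_of_lt_of_le zero_lt_one he1
  have hPe : ∀ t ∈ Icc a b, e ≤ κ^2 + (Λ t).re := by
    intro t ht
    rw [he_eq]
    have := hcre t ht; linarith
  have hDe : e ≤ D := le_trans (hPe 0 hIcc0) (hDre 0 hIcc0)
  have hD1 : 1 ≤ D := le_trans he1 hDe
  -- bound on the derivative of Re Λ via B
  have hBB : ∀ t ∈ Icc a b, |(deriv Λ t).re| ≤ B * (κ^2 + (Λ t).re) := by
    have hlogd : ∀ t ∈ Icc a b,
        deriv (fun u => Real.log (κ^2 + (Λ u).re)) t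
          = (deriv Λ t).re / (κ^2 + (Λ t).re) := by
      intro t ht
      have hP' : HasDerivAt (fun u => κ^2 + (Λ u).re) ((deriv Λ t).re) t :=
        (hre t).const_add (κ^2)
      have hne : κ^2 + (Λ t).re ≠ 0 := by
        have := hPe t ht; linarith
      exact (hP'.log hne).deriv
    obtain ⟨M, hM⟩ := hcomp.exists_bound_of_continuousOn
      ((Complex.continuous_re.comp hΛdc).continuousOn)
    have hBdd : BddAbove ((fun s =>
        |deriv (fun t => Real.log (κ^2 + (Λ t).re)) s|) '' Icc a b) := by
      refine ⟨M, ?_⟩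
      rintro z ⟨t, ht, rfl⟩
      show |deriv (fun u => Real.log (κ^2 + (Λ u).re)) t| ≤ M
      rw [hlogd t ht, abs_div]
      have h1 : (1:ℝ) ≤ κ^2 + (Λ t).re := le_trans he1 (hPe t ht)
      have h2 : |κ^2 + (Λ t).re| = κ^2 + (Λ t).re := abs_of_pos (by linarith)
      calc |(deriv Λ t).re| / |κ^2 + (Λ t).re|
          ≤ |(deriv Λ t).re| := by
            apply div_le_self (abs_nonneg _)
            rw [h2]; linarith
        _ ≤ M := by simpa [Real.norm_eq_abs] using hM t ht
    intro t ht
    have h1 : |deriv (fun u => Real.log (κ^2 + (Λ u).re)) t| ≤ B := by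
      rw [hB]
      exact le_csSup hBdd ⟨t, ht, rfl⟩
    rw [hlogd t ht, abs_div] at h1
    have hPpos : 0 < κ^2 + (Λ t).re := lt_of_lt_of_le he0 (hPe t ht)
    have h2 : |κ^2 + (Λ t).re| = κ^2 + (Λ t).re := abs_of_pos hPpos
    rw [h2, div_le_iff₀ hPpos] at h1
    linarith
  
  have hB0 : 0 ≤ B := by
    nlinarith [hBB 0 hIcc0, hPe 0 hIcc0, abs_nonneg ((deriv Λ 0).re), he0]
  -- the energy function and its derivative
  obtain ⟨W, hWt_eq⟩ : ∃ W : ℝ → ℝ, ∀ t, W t = A + (κ^2 + (Λ t).re) :=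
    ⟨_, fun _ => rfl⟩
  obtain ⟨F, hFt_eq⟩ : ∃ F : ℝ → ℝ,
      ∀ t, F t = W t * Complex.normSq (T t) + Complex.normSq (T' t) :=
    ⟨_, fun _ => rfl⟩
  obtain ⟨G, hGt_eq⟩ : ∃ G : ℝ → ℝ, ∀ t, G t = (deriv Λ t).re * Complex.normSq (T t)
      + 2*(A + κ^2) * ((starRingEnd ℂ) (T t) * T' t).re
      - 2*(Λ t).im * ((starRingEnd ℂ) (T t) * T' t).im :=
    ⟨_, fun _ => rfl⟩
  have hF' : ∀ t, HasDerivAt F (G t) t := by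
    intro t
    have h1 := hasDerivAt_normSq_comp (hT1 t)
    have h2 := hasDerivAt_normSq_comp (hT2 t)
    have hW : HasDerivAt W ((deriv Λ t).re) t := by
      have hWfun : W = fun x => A + (κ^2 + (Λ x).re) := funext hWt_eq
      rw [hWfun]
      exact ((hre t).const_add (κ^2)).const_add A
    have h3 := (hW.mul h1).add h2
    have hT''eq : T'' t = -(Λ t * T t) := eq_neg_of_add_eq_zero_left (hode t)
    rw [hT''eq] at h3
    have hFfun : F = fun t => W t * Complex.normSq (T t) + Complex.normSq (T' t) :=
      funext hFt_eq
    rw [hFfun]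
    refine h3.congr_deriv ?_
    rw [hGt_eq t, hWt_eq t]
    simp [Complex.mul_re, Complex.mul_im, Complex.normSq_apply]
    ring
  obtain ⟨f, hfdef⟩ : ∃ f : ℝ, f = B + κ^2 + 2 * Real.sqrt A := ⟨_, rfl⟩
  have hf0 : 0 ≤ f := by
    rw [hfdef]
    have h4 : 0 ≤ Real.sqrt A := Real.sqrt_nonneg A
    nlinarith
  -- pointwise bound |G| ≤ f * |F| on the interval
  have hbound : ∀ t ∈ Icc a b, |G t| ≤ f * |F t| := by
    intro t ht
    have hx2 : Complex.normSq (T t) = ‖T t‖^2 := (Complex.sq_norm _).symm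
    have hy2 : Complex.normSq (T' t) = ‖T' t‖^2 := (Complex.sq_norm _).symm
    have hx0 : 0 ≤ ‖T t‖ := norm_nonneg _
    have hy0 : 0 ≤ ‖T' t‖ := norm_nonneg _
    have hu : |((starRingEnd ℂ) (T t) * T' t).re| ≤ ‖T t‖ * ‖T' t‖ := by
      calc |((starRingEnd ℂ) (T t) * T' t).re|
          ≤ ‖(starRingEnd ℂ) (T t) * T' t‖ := Complex.abs_re_le_norm _
        _ = ‖T t‖ * ‖T' t‖ := by rw [norm_mul, Complex.norm_conj]
    have hv : |((starRingEnd ℂ) (T t) * T' t).im| ≤ ‖T t‖ * ‖T' t‖ := by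
      calc |((starRingEnd ℂ) (T t) * T' t).im|
          ≤ ‖(starRingEnd ℂ) (T t) * T' t‖ := Complex.abs_im_le_norm _
        _ = ‖T t‖ * ‖T' t‖ := by rw [norm_mul, Complex.norm_conj]
    have hWt : 1 + A ≤ W t := by
      rw [hWt_eq t]
      have := hPe t ht; linarith
    have hW0 : 0 ≤ W t := by linarith
    have hFt : F t = W t * ‖T t‖^2 + ‖T' t‖^2 := by
      rw [hFt_eq t, hx2, hy2]
    have hF0 : 0 ≤ F t := by rw [hFt]; positivity
    have hsq : Real.sqrt (W t) ^ 2 = W t := Real.sq_sqrt hW0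
    have hsA : Real.sqrt A ^ 2 = A := Real.sq_sqrt hA0
    have hsA0 : 0 ≤ Real.sqrt A := Real.sqrt_nonneg A
    have hsW1 : 1 ≤ Real.sqrt (W t) := by
      rw [show (1:ℝ) = Real.sqrt 1 from Real.sqrt_one.symm]
      exact Real.sqrt_le_sqrt (by linarith)
    have hsWA : Real.sqrt A ≤ Real.sqrt (W t) := Real.sqrt_le_sqrt (by linarith)
    have hxy : 2 * (‖T t‖ * ‖T' t‖) * Real.sqrt (W t) ≤ F t := by
      rw [hFt]
      nlinarith [sq_nonneg (Real.sqrt (W t) * ‖T t‖ - ‖T' t‖), hsq]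
    have hcoef : 2*A + κ^2 ≤ (2*Real.sqrt A + κ^2) * Real.sqrt (W t) := by
      have p1 : 2*Real.sqrt A * Real.sqrt A ≤ 2*Real.sqrt A * Real.sqrt (W t) :=
        mul_le_mul_of_nonneg_left hsWA (by positivity)
      have p2 : κ^2 * 1 ≤ κ^2 * Real.sqrt (W t) :=
        mul_le_mul_of_nonneg_left hsW1 (by positivity)
      nlinarith [hsA]
    have k1 : |(deriv Λ t).re| * Complex.normSq (T t) ≤ B * F t := by
      have h1 : |(deriv Λ t).re| * Complex.normSq (T t)
          ≤ (B * (κ^2 + (Λ t).re)) * Complex.normSq (T t) :=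
        mul_le_mul_of_nonneg_right (hBB t ht) (Complex.normSq_nonneg _)
      have h2 : (κ^2 + (Λ t).re) ≤ W t := by rw [hWt_eq t]; linarith
      have h3 : (B * (κ^2 + (Λ t).re)) * Complex.normSq (T t) ≤ B * F t := by
        rw [hFt, hx2]
        nlinarith [mul_le_mul_of_nonneg_right (mul_le_mul_of_nonneg_left h2 hB0)
            (sq_nonneg (‖T t‖)),
          mul_nonneg hB0 (sq_nonneg (‖T' t‖))]
      linarith
    have e1 : 2*(A+κ^2) * |((starRingEnd ℂ) (T t) * T' t).re|
        ≤ 2*(A+κ^2)*(‖T t‖ * ‖T' t‖) :=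
      mul_le_mul_of_nonneg_left hu (by positivity)
    have e2 : 2*|(Λ t).im| * |((starRingEnd ℂ) (T t) * T' t).im|
        ≤ 2*A*(‖T t‖ * ‖T' t‖) := by
      nlinarith [mul_le_mul (himA t ht) hv (abs_nonneg _) hA0]
    have k3 : (2*A+κ^2) * (2*(‖T t‖ * ‖T' t‖))
        ≤ (2*Real.sqrt A + κ^2) * F t := by
      have h2xy : 0 ≤ 2*(‖T t‖ * ‖T' t‖) := by positivity
      calc (2*A+κ^2) * (2*(‖T t‖ * ‖T' t‖))
          ≤ ((2*Real.sqrt A + κ^2) * Real.sqrt (W t))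
            * (2*(‖T t‖ * ‖T' t‖)) :=
            mul_le_mul_of_nonneg_right hcoef h2xy
        _ = (2*Real.sqrt A + κ^2)
            * (2*(‖T t‖ * ‖T' t‖) * Real.sqrt (W t)) := by ring
        _ ≤ (2*Real.sqrt A + κ^2) * F t :=
            mul_le_mul_of_nonneg_left hxy (by positivity)
    have habs : |G t| ≤ |(deriv Λ t).re| * Complex.normSq (T t)
        + 2*(A+κ^2) * |((starRingEnd ℂ) (T t) * T' t).re|
        + 2*|(Λ t).im| * |((starRingEnd ℂ) (T t) * T' t).im| := by
      rw [hGt_eq t]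
      have h1 := abs_sub ((deriv Λ t).re * Complex.normSq (T t)
        + 2*(A + κ^2) * ((starRingEnd ℂ) (T t) * T' t).re)
        (2*(Λ t).im * ((starRingEnd ℂ) (T t) * T' t).im)
      have h2 := abs_add_le ((deriv Λ t).re * Complex.normSq (T t))
        (2*(A + κ^2) * ((starRingEnd ℂ) (T t) * T' t).re)
      have h3 : |(deriv Λ t).re * Complex.normSq (T t)|
          = |(deriv Λ t).re| * Complex.normSq (T t) := by
        rw [abs_mul, abs_of_nonneg (Complex.normSq_nonneg _)]
      have h4 : |2*(A + κ^2) * ((starRingEnd ℂ) (T t) * T' t).re|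
          = 2*(A+κ^2) * |((starRingEnd ℂ) (T t) * T' t).re| := by
        rw [abs_mul, abs_of_nonneg (by positivity : (0:ℝ) ≤ 2*(A+κ^2))]
      have h5 : |2*(Λ t).im * ((starRingEnd ℂ) (T t) * T' t).im|
          = 2*|(Λ t).im| * |((starRingEnd ℂ) (T t) * T' t).im| := by
        rw [abs_mul, abs_mul, abs_of_nonneg (by norm_num : (0:ℝ) ≤ 2)]
      linarith [h1, h2, h3, h4, h5]
    have hFabs : |F t| = F t := abs_of_nonneg hF0
    rw [hFabs, hfdef]
    calc |G t| ≤ |(deriv Λ t).re| * Complex.normSq (T t)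
        + 2*(A+κ^2) * |((starRingEnd ℂ) (T t) * T' t).re|
        + 2*|(Λ t).im| * |((starRingEnd ℂ) (T t) * T' t).im| := habs
      _ ≤ B * F t + (2*A+κ^2) * (2*(‖T t‖ * ‖T' t‖)) := by
          linarith [k1, e1, e2]
      _ ≤ B * F t + (2*Real.sqrt A + κ^2) * F t := by linarith [k3]
      _ = (B + κ^2 + 2 * Real.sqrt A) * F t := by ring
  
  -- Gronwall
  have hkey := gronwall_two_sided F G f hf0 a b ha hb hF' hbound
  intro s hs
  obtain ⟨r, hrdef⟩ : ∃ r : ℝ, r = b - a := ⟨_, rfl⟩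
  simp only [← hrdef] at hL hkey ⊢
  have hr0 : 0 ≤ r := by rw [hrdef]; linarith
  have hsr : 0 ≤ Real.sqrt A := Real.sqrt_nonneg A
  -- lower bound of F s and upper bound of F 0
  have hWs_lb : e ≤ W s := by
    rw [hWt_eq s]; have := hPe s hs; linarith
  have hxs2 : Complex.normSq (T s) = ‖T s‖^2 := (Complex.sq_norm _).symm
  have hFs_lb : e * ‖T s‖^2 ≤ F s := by
    rw [hFt_eq s, hxs2]
    linarith only [mul_le_mul_of_nonneg_right hWs_lb (sq_nonneg (‖T s‖)),
      Complex.normSq_nonneg (T' s)]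
  have hFs_nn : 0 ≤ F s := by
    rw [hFt_eq s]
    have h0 : 0 ≤ W s := le_trans he0.le hWs_lb
    exact add_nonneg (mul_nonneg h0 (Complex.normSq_nonneg _)) (Complex.normSq_nonneg _)
  have hW0_ub : W 0 ≤ A + D := by
    rw [hWt_eq 0]; have := hDre 0 hIcc0; linarith
  have hW0_nn : 0 ≤ W 0 := by
    rw [hWt_eq 0]; have := hPe 0 hIcc0; linarith
  have hF0_ub : F 0 ≤ (A + D) * ‖T 0‖^2 + ‖T' 0‖^2 := by
    rw [hFt_eq 0, (Complex.sq_norm (T 0)).symm, (Complex.sq_norm (T' 0)).symm]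
    linarith only [mul_le_mul_of_nonneg_right hW0_ub (sq_nonneg (‖T 0‖))]
  have hF0_nn : 0 ≤ F 0 := by
    rw [hFt_eq 0]
    exact add_nonneg (mul_nonneg hW0_nn (Complex.normSq_nonneg _)) (Complex.normSq_nonneg _)
  have hchain : e * ‖T s‖^2
      ≤ ((A + D) * ‖T 0‖^2 + ‖T' 0‖^2) * Real.exp (f * r) := by
    have h1 := hkey s hs
    rw [abs_of_nonneg hFs_nn, abs_of_nonneg hF0_nn] at h1
    have h2 : F 0 * Real.exp (f * r)
        ≤ ((A + D) * ‖T 0‖^2 + ‖T' 0‖^2) * Real.exp (f * r) :=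
      mul_le_mul_of_nonneg_right hF0_ub (Real.exp_pos _).le
    calc e * ‖T s‖^2 ≤ F s := hFs_lb
      _ ≤ F 0 * Real.exp (f * r) := h1
      _ ≤ _ := h2
  -- square roots
  have hX0 : 0 ≤ ‖T 0‖ := norm_nonneg _
  have hY0 : 0 ≤ ‖T' 0‖ := norm_nonneg _
  have hxs0 : 0 ≤ ‖T s‖ := norm_nonneg _
  have hAD0 : (0:ℝ) ≤ A + D := by linarith
  have step1 : ‖T s‖ * Real.sqrt e
      ≤ (Real.sqrt (A+D) * ‖T 0‖ + ‖T' 0‖) * Real.exp (f*r/2) := by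
    have h1 : (Real.sqrt e)^2 = e := Real.sq_sqrt he0.le
    have h2 : (Real.sqrt (A+D))^2 = A + D := Real.sq_sqrt hAD0
    have h3 : (Real.exp (f*r/2))^2 = Real.exp (f*r) := by
      rw [sq, ← Real.exp_add]; congr 1; ring
    have hcross : 0 ≤ 2*(Real.sqrt (A+D) * ‖T 0‖ * ‖T' 0‖)
        * Real.exp (f*r) := by positivity
    have eq1 : (‖T s‖ * Real.sqrt e)^2 = e * ‖T s‖^2 := by
      rw [mul_pow, h1]; ring
    have eq2 : ((Real.sqrt (A+D) * ‖T 0‖ + ‖T' 0‖)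
          * Real.exp (f*r/2))^2
        = ((A + D) * ‖T 0‖^2 + ‖T' 0‖^2) * Real.exp (f*r)
          + 2*(Real.sqrt (A+D) * ‖T 0‖ * ‖T' 0‖)
            * Real.exp (f*r) := by
      rw [mul_pow, h3]
      linear_combination (Real.exp (f*r) * ‖T 0‖^2) * h2
    have hsq1 : (‖T s‖ * Real.sqrt e)^2
        ≤ ((Real.sqrt (A+D) * ‖T 0‖ + ‖T' 0‖) * Real.exp (f*r/2))^2 := by
      rw [eq1, eq2]
      linarith only [hchain, hcross]
    calc ‖T s‖ * Real.sqrt e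
        = Real.sqrt ((‖T s‖ * Real.sqrt e)^2) :=
          (Real.sqrt_sq (by positivity)).symm
      _ ≤ Real.sqrt (((Real.sqrt (A+D) * ‖T 0‖ + ‖T' 0‖)
            * Real.exp (f*r/2))^2) := Real.sqrt_le_sqrt hsq1
      _ = _ := Real.sqrt_sq (by positivity)
  have step2 : Real.sqrt (A+D) ≤ Real.sqrt D * Real.exp (A/2) := by
    have h1 : A + D ≤ D * Real.exp A := by
      linarith only [mul_le_mul_of_nonneg_left (Real.add_one_le_exp A)
          (by linarith : (0:ℝ) ≤ D),
        mul_nonneg (sub_nonneg.mpr hD1) hA0]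
    calc Real.sqrt (A+D) ≤ Real.sqrt (D * Real.exp A) := Real.sqrt_le_sqrt h1
      _ = Real.sqrt D * Real.sqrt (Real.exp A) := Real.sqrt_mul (by linarith) _
      _ = Real.sqrt D * Real.exp (A/2) := by rw [Real.exp_half]
  -- the exponent inequality
  have hAL : A/2 + f*r/2 ≤ L := by
    have h2κr : 0 ≤ 2*κ*r := mul_nonneg (mul_nonneg (by norm_num) hκ0) hr0
    have hκr : r ≤ κ*r := by
      linarith only [mul_nonneg (sub_nonneg.mpr hκ1) hr0]
    have h0κr : 0 ≤ κ*r := le_trans hr0 hκr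
    have hs1 : 2*κ*r ≤ Real.sinh (2*κ*r) := Real.self_le_sinh_iff.mpr h2κr
    have hs2 : Real.sinh (2*r) ≤ Real.sinh (2*κ*r) :=
      Real.sinh_le_sinh.mpr (by linarith only [mul_nonneg (sub_nonneg.mpr hκ1) hr0])
    have hs3 : Real.sinh (2*r) = 2*Real.sinh r * Real.cosh r := Real.sinh_two_mul r
    have hs4 : r ≤ Real.sinh r := Real.self_le_sinh_iff.mpr hr0
    have hs5 : Real.sinh r ≤ Real.cosh r := by
      linarith only [Real.cosh_sub_sinh r, Real.exp_pos (-r)]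
    have hs6 : 2*r^2 ≤ Real.sinh (2*r) := by
      rw [hs3]
      have := mul_le_mul hs4 (hs4.trans hs5) hr0 (hr0.trans hs4)
      linarith
    have hs0 : 0 ≤ Real.sinh (2*κ*r) := le_trans h2κr hs1
    have hc1 : r/2 ≤ Real.cosh (κ*r)^2 := by
      have h1 : κ*r ≤ Real.sinh (κ*r) := Real.self_le_sinh_iff.mpr h0κr
      have h2 := Real.cosh_sq (κ*r)
      have h3 : r * r ≤ Real.sinh (κ*r) * Real.sinh (κ*r) :=
        mul_le_mul (hκr.trans h1) (hκr.trans h1) hr0 (le_trans h0κr h1)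
      linarith only [h2, h3, sq_nonneg (2*r-1), hr0]
    have hc2 : r * Real.sqrt A ≤ r^2/6 + 3*A/2 := by
      linarith only [sq_nonneg (r - 3*Real.sqrt A), Real.sq_sqrt hA0]
    have hi : 2*κ^2*r ≤ κ * Real.sinh (2*κ*r) := by
      linarith only [mul_le_mul_of_nonneg_left hs1 hκ0]
    have hii : 2*r^2 ≤ κ * Real.sinh (2*κ*r) := by
      have := le_mul_of_one_le_left hs0 hκ1
      linarith
    have hks : (0:ℝ) ≤ κ * Real.sinh (2*κ*r) := mul_nonneg hκ0 hs0
    have hBc : B*(r/2) ≤ B*Real.cosh (κ*r)^2 := mul_le_mul_of_nonneg_left hc1 hB0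
    rw [hL, hfdef]
    linarith only [hc2, hBc, hi, hii, hks]
  -- combine
  have hone_exp : (1:ℝ) ≤ Real.exp (A/2) := by
    linarith only [Real.add_one_le_exp (A/2), hA0]
  have hmain : ‖T s‖ * Real.sqrt e
      ≤ (Real.sqrt D * ‖T 0‖ + ‖T' 0‖) * Real.exp L := by
    calc ‖T s‖ * Real.sqrt e
        ≤ (Real.sqrt (A+D) * ‖T 0‖ + ‖T' 0‖) * Real.exp (f*r/2) :=
          step1
      _ ≤ (Real.sqrt D * Real.exp (A/2) * ‖T 0‖
            + ‖T' 0‖ * Real.exp (A/2)) * Real.exp (f*r/2) := by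
          have h1 := mul_le_mul_of_nonneg_right step2 hX0
          have h2 := le_mul_of_one_le_right hY0 hone_exp
          have h3 : Real.sqrt (A+D) * ‖T 0‖
              ≤ Real.sqrt D * Real.exp (A/2) * ‖T 0‖ := h1
          apply mul_le_mul_of_nonneg_right _ (Real.exp_pos _).le
          linarith
      _ = (Real.sqrt D * ‖T 0‖ + ‖T' 0‖)
            * Real.exp (A/2 + f*r/2) := by rw [Real.exp_add]; ring
      _ ≤ (Real.sqrt D * ‖T 0‖ + ‖T' 0‖) * Real.exp L := by
          apply mul_le_mul_of_nonneg_left (Real.exp_le_exp.mpr hAL)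
          positivity
  have hcosh1 : 1 ≤ Real.cosh (κ * r) := Real.one_le_cosh _
  have hse : 0 < Real.sqrt e := Real.sqrt_pos.mpr he0
  have final : ‖T s‖
      ≤ ((Real.sqrt D * ‖T 0‖ + ‖T' 0‖)
          * Real.exp L * Real.cosh (κ*r)) / Real.sqrt e := by
    rw [le_div_iff₀ hse]
    calc ‖T s‖ * Real.sqrt e
        ≤ (Real.sqrt D * ‖T 0‖ + ‖T' 0‖) * Real.exp L := hmain
      _ ≤ (Real.sqrt D * ‖T 0‖ + ‖T' 0‖) * Real.exp L
            * Real.cosh (κ*r) := le_mul_of_one_le_right (by positivity) hcosh1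
  have hfe : ‖T 0‖ * Real.sqrt (D/e) * Real.exp L * Real.cosh (κ*r)
      + ‖T' 0‖ * (1/Real.sqrt e) * Real.exp L * Real.cosh (κ*r)
      = ((Real.sqrt D * ‖T 0‖ + ‖T' 0‖)
          * Real.exp L * Real.cosh (κ*r)) / Real.sqrt e := by
    rw [Real.sqrt_div (by linarith : (0:ℝ) ≤ D)]
    field_simp
  rw [hfe]
  exact final
end

section
/- Let D : C∞_c(M; E) → C∞_c(M; E) be a linear differential operator on sections of a vector bundle admitting advanced/retarded Green operators E± : C∞_c → C∞ with D∘E± = E±∘D = id on C∞_c and supp(E±f) ⊆ J±(supp f), and let E = E⁺ − E⁻. Then every smooth solution v of Dv = 0 whose support has compact intersection with each time slice {t} × Σ lies in the image of E: there exists f ∈ C∞_c with v = Ef. -/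
/-!
Cut the solution `v` sharply at the slice `t = 0` into a future part `v⁺` and a past part `v⁻`.
Since `D v = 0` and `D` does not enlarge supports, `f := D v⁺ = -D v⁻` is supported in
`supp v⁺ ∩ supp v⁻ ⊆ supp v ∩ {t = 0}`, which is compact. Then `v⁺` and `-v⁻` are solutions of
`D u = f` with past, resp. future, bounded and slicewise compact support, so uniqueness gives
`v⁺ = E⁺ f` and `-v⁻ = E⁻ f`. A sharp cutoff suffices in place of the smooth `χ`, because the
argument only ever looks at supports.
-/

open Function Set

section TimeSplit

variable {X V : Type*} [AddCommGroup V]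

noncomputable def futurePart (τ : X → ℝ) (v : X → V) : X → V := {x | 0 ≤ τ x}.indicator v

noncomputable def pastPart (τ : X → ℝ) (v : X → V) : X → V := {x | τ x < 0}.indicator v

theorem futurePart_add_pastPart (τ : X → ℝ) (v : X → V) :
    futurePart τ v + pastPart τ v = v := by
  have hcompl : {x | 0 ≤ τ x}ᶜ = {x | τ x < 0} := by ext; simp
  rw [futurePart, pastPart, ← hcompl, indicator_self_add_compl]

theorem map_pastPart_of_map_eq_zero (D : (X → V) →+ (X → V)) {τ : X → ℝ} {v : X → V}
    (hv : D v = 0) : D (pastPart τ v) = -D (futurePart τ v) := by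
  rw [eq_neg_iff_add_eq_zero, add_comm, ← map_add, futurePart_add_pastPart, hv]

variable [TopologicalSpace X]

theorem tsupport_indicator_subset (s : Set X) (f : X → V) :
    tsupport (s.indicator f) ⊆ tsupport f ∩ closure s := by
  rw [tsupport, support_indicator, inter_comm]
  exact closure_inter_subset_inter_closure _ _

theorem isCompact_tsupport_inter_of_tsupport_subset {u v : X → V} {K : Set X}
    (hK : IsClosed K) (hv : IsCompact (tsupport v ∩ K)) (huv : tsupport u ⊆ tsupport v) :
    IsCompact (tsupport u ∩ K) :=
  hv.of_isClosed_subset ((isClosed_tsupport u).inter hK) (inter_subset_inter_left K huv)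

variable {τ : X → ℝ}

theorem tsupport_futurePart_subset (hτ : Continuous τ) (v : X → V) :
    tsupport (futurePart τ v) ⊆ tsupport v ∩ {x | 0 ≤ τ x} :=
  (tsupport_indicator_subset _ v).trans
    (inter_subset_inter_right _ (isClosed_le continuous_const hτ).closure_subset)

theorem tsupport_pastPart_subset (hτ : Continuous τ) (v : X → V) :
    tsupport (pastPart τ v) ⊆ tsupport v ∩ {x | τ x ≤ 0} :=
  (tsupport_indicator_subset _ v).trans
    (inter_subset_inter_right _ (closure_lt_subset_le hτ continuous_const))

theorem tsupport_map_futurePart_subset (D : (X → V) →+ (X → V)) (hD : ∀ u, support (D u) ⊆ tsupport u)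
    (hτ : Continuous τ) {v : X → V} (hv : D v = 0) :
    tsupport (D (futurePart τ v)) ⊆ tsupport v ∩ {x | τ x = 0} := by
  refine closure_minimal (fun x hx => ?_)
    ((isClosed_tsupport v).inter (isClosed_eq hτ continuous_const))
  have hpast : x ∈ support (D (pastPart τ v)) := by
    rwa [map_pastPart_of_map_eq_zero D hv, support_neg]
  obtain ⟨hxv, hx₀⟩ := tsupport_futurePart_subset hτ v (hD _ hx)
  exact ⟨hxv, le_antisymm (tsupport_pastPart_subset hτ v (hD _ hpast)).2 hx₀⟩

end TimeSplit

theorem propagator_surjective_on_spatially_compact_solutions_general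
    {S V : Type*} [TopologicalSpace S] [AddCommGroup V] [Module ℝ V]
    (D Ep Em : ((ℝ × S) → V) →ₗ[ℝ] ((ℝ × S) → V))
    (hDsupp : ∀ u : (ℝ × S) → V, Function.support (D u) ⊆ tsupport u)
    (hUniqP : ∀ (u : (ℝ × S) → V) (f : (ℝ × S) → V), HasCompactSupport f →
      D u = f → (∃ t₀ : ℝ, ∀ p ∈ Function.support u, t₀ ≤ p.1) →
      (∀ t : ℝ, IsCompact (tsupport u ∩ {p : ℝ × S | p.1 = t})) → u = Ep f)
    (hUniqM : ∀ (u : (ℝ × S) → V) (f : (ℝ × S) → V), HasCompactSupport f →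
      D u = f → (∃ t₁ : ℝ, ∀ p ∈ Function.support u, p.1 ≤ t₁) →
      (∀ t : ℝ, IsCompact (tsupport u ∩ {p : ℝ × S | p.1 = t})) → u = Em f)
    (v : (ℝ × S) → V) (hv : D v = 0)
    (hvslice : ∀ t : ℝ, IsCompact (tsupport v ∩ {p : ℝ × S | p.1 = t})) :
    ∃ f : (ℝ × S) → V, HasCompactSupport f ∧ v = Ep f - Em f := by
  set vp := futurePart Prod.fst v
  set vm := pastPart Prod.fst v
  have hvp := tsupport_futurePart_subset continuous_fst v
  have hvm := tsupport_pastPart_subset continuous_fst v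
  have hslice {u : (ℝ × S) → V} (hu : tsupport u ⊆ tsupport v) (t : ℝ) :=
    isCompact_tsupport_inter_of_tsupport_subset (isClosed_eq continuous_fst continuous_const)
      (hvslice t) hu
  have hDvm : D vm = -D vp := map_pastPart_of_map_eq_zero D.toAddMonoidHom hv
  have hf : HasCompactSupport (D vp) := (hvslice 0).of_isClosed_subset (isClosed_tsupport _)
    (tsupport_map_futurePart_subset D.toAddMonoidHom hDsupp continuous_fst hv)
  have hEp : vp = Ep (D vp) := hUniqP vp _ hf rfl
    ⟨0, fun p hp => (hvp (subset_tsupport _ hp)).2⟩ (hslice (hvp.trans inter_subset_left))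
  have hEm : -vm = Em (D vp) := by
    refine hUniqM (-vm) _ hf ?_ ⟨0, fun p hp => (hvm (subset_tsupport _ ?_)).2⟩ ?_
    · rw [map_neg, hDvm, neg_neg]
    · rwa [support_neg] at hp
    · rw [tsupport_neg]; exact hslice (hvm.trans inter_subset_left)
  exact ⟨D vp, hf, by rw [← hEp, ← hEm, sub_neg_eq_add, futurePart_add_pastPart]⟩

/-- Surjectivity of the propagator `E = E⁺ − E⁻` onto spatially compactly
supported solutions: given Green operators `E±` for a (support-nonincreasing)
operator `D`, with uniqueness of solutions with past/future bounded,
slicewise compact support, every solution `v` of `D v = 0` whose support meets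
each time slice in a compact set is of the form `v = E f = E⁺ f − E⁻ f`
for some compactly supported `f`. -/
theorem propagator_surjective_on_spatially_compact_solutions
    {S V : Type*} [TopologicalSpace S] [AddCommGroup V] [Module ℝ V]
    (D Ep Em : ((ℝ × S) → V) →ₗ[ℝ] ((ℝ × S) → V))
    (hDsupp : ∀ u : (ℝ × S) → V, Function.support (D u) ⊆ tsupport u)
    (hDEp : ∀ f, HasCompactSupport f → D (Ep f) = f)
    (hDEm : ∀ f, HasCompactSupport f → D (Em f) = f)
    (hEpD : ∀ f, HasCompactSupport f → Ep (D f) = f)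
    (hEmD : ∀ f, HasCompactSupport f → Em (D f) = f)
    (hsuppEp : ∀ f, HasCompactSupport f →
      ∃ t₀ : ℝ, ∀ p ∈ Function.support (Ep f), t₀ ≤ p.1)
    (hsuppEm : ∀ f, HasCompactSupport f →
      ∃ t₁ : ℝ, ∀ p ∈ Function.support (Em f), p.1 ≤ t₁)
    (hUniqP : ∀ (u : (ℝ × S) → V) (f : (ℝ × S) → V), HasCompactSupport f →
      D u = f → (∃ t₀ : ℝ, ∀ p ∈ Function.support u, t₀ ≤ p.1) →
      (∀ t : ℝ, IsCompact (tsupport u ∩ {p : ℝ × S | p.1 = t})) → u = Ep f)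
    (hUniqM : ∀ (u : (ℝ × S) → V) (f : (ℝ × S) → V), HasCompactSupport f →
      D u = f → (∃ t₁ : ℝ, ∀ p ∈ Function.support u, p.1 ≤ t₁) →
      (∀ t : ℝ, IsCompact (tsupport u ∩ {p : ℝ × S | p.1 = t})) → u = Em f)
    (v : (ℝ × S) → V) (hv : D v = 0)
    (hvslice : ∀ t : ℝ, IsCompact (tsupport v ∩ {p : ℝ × S | p.1 = t})) :
    ∃ f : (ℝ × S) → V, HasCompactSupport f ∧ v = Ep f - Em f :=
  propagator_surjective_on_spatially_compact_solutions_general D Ep Em hDsupp hUniqP hUniqM v hv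
    hvslice
end
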